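/- arXiv:1106.1304 — 2 statements merged into one kernel-verified Lean document; each statement's English description precedes it below -/
import Mathlib

section
/- For 0 ≤ α ≤ 1, the multiple Mahler measure m(1−x, 1−e^{2πiα}x) := ∫_0^1 log|1−e^{2πiθ}| · log|1−e^{2πi(θ+α)}| dθ equals (π²/2)(α² − α + 1/6). -/
/-!
For `|r| < 1` the function `θ ↦ log ‖1 - r e^{2πiθ}‖` is the real part of
`-log (1 - r e^{2πiθ})`, so it has the absolutely convergent Fourier expansion
`-∑ rⁿ cos (2πnθ) / n`; integrating term by term and using orthogonality, the regularized
integral equals `∑ r^{2n} cos (2πnα) / (2n²)`.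

Let `r → 1⁻`. On the series side the terms are dominated by `1 / n²`. On the integral side
`‖1 - r e^{2πiθ}‖² = (1 - r)² + 4r sin² (πθ)` squeezes the logarithm between `log |sin (πθ)|`
and `log 2`, so each factor is dominated by `log 2 + |log |sin (πθ)||`, which is square
integrable because `|log x| ≤ 4 x^{-1/4}` on `(0, 1]`. The limiting series is the Fourier series
of the Bernoulli polynomial `B₂(α) = α² - α + 1/6`.
-/

open Real MeasureTheory Filter Topology

noncomputable def logNormOneSub (r θ : ℝ) : ℝ :=
  Real.log ‖1 - (r : ℂ) * Complex.exp (2 * π * Complex.I * θ)‖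

lemma exp_two_pi_I_mul_ofReal (θ : ℝ) :
    Complex.exp (2 * π * Complex.I * θ) = Complex.exp ((2 * π * θ : ℝ) * Complex.I) := by
  push_cast; ring_nf

lemma norm_ofReal_mul_exp_two_pi_I (r θ : ℝ) :
    ‖(r : ℂ) * Complex.exp (2 * π * Complex.I * θ)‖ = |r| := by
  rw [exp_two_pi_I_mul_ofReal, norm_mul, Complex.norm_exp_ofReal_mul_I, Complex.norm_real,
    mul_one, Real.norm_eq_abs]

lemma hasSum_logNormOneSub {r : ℝ} (hr : |r| < 1) (θ : ℝ) :
    HasSum (fun n : ℕ => -(r ^ n * cos (2 * π * n * θ) / n)) (logNormOneSub r θ) := by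
  have hz : ‖(r : ℂ) * Complex.exp (2 * π * Complex.I * θ)‖ < 1 := by
    rwa [norm_ofReal_mul_exp_two_pi_I]
  convert Complex.hasSum_re (Complex.hasSum_taylorSeries_neg_log hz).neg using 1
  · ext n
    rw [exp_two_pi_I_mul_ofReal, mul_pow, ← Complex.exp_nat_mul, ← Complex.ofReal_pow,
      ← Complex.ofReal_natCast, show ((n : ℝ) : ℂ) * ((2 * π * θ : ℝ) * Complex.I)
        = ((2 * π * n * θ : ℝ) : ℂ) * Complex.I by push_cast; ring]
    simp only [Complex.neg_re, Complex.div_ofReal_re, Complex.re_ofReal_mul,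
      Complex.exp_ofReal_mul_I_re]
  · rw [neg_neg, Complex.log_re, logNormOneSub]

lemma continuous_logNormOneSub {r : ℝ} (hr : |r| < 1) : Continuous (logNormOneSub r) := by
  refine Continuous.log (by fun_prop) fun θ hθ => ?_
  have := norm_sub_norm_le (1 : ℂ) ((r : ℂ) * Complex.exp (2 * π * Complex.I * θ))
  rw [hθ, norm_one, norm_ofReal_mul_exp_two_pi_I] at this
  linarith

lemma sq_norm_one_sub_ofReal_mul_exp (r θ : ℝ) :
    ‖1 - (r : ℂ) * Complex.exp (2 * π * Complex.I * θ)‖ ^ 2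
      = (1 - r) ^ 2 + 4 * r * sin (π * θ) ^ 2 := by
  rw [exp_two_pi_I_mul_ofReal, Complex.sq_norm, Complex.normSq_apply]
  simp only [Complex.sub_re, Complex.sub_im, Complex.one_re, Complex.one_im,
    Complex.re_ofReal_mul, Complex.im_ofReal_mul, Complex.exp_ofReal_mul_I_re,
    Complex.exp_ofReal_mul_I_im]
  rw [show 2 * π * θ = 2 * (π * θ) by ring, cos_two_mul, sin_two_mul]
  linear_combination 4 * r * (r * cos (π * θ) ^ 2 - 1) * sin_sq_add_cos_sq (π * θ)

lemma logNormOneSub_le_log_two {r : ℝ} (hr : |r| ≤ 1) (θ : ℝ) : logNormOneSub r θ ≤ log 2 := by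
  have hle : ‖1 - (r : ℂ) * Complex.exp (2 * π * Complex.I * θ)‖ ≤ 2 := by
    grw [norm_sub_le, norm_one, norm_ofReal_mul_exp_two_pi_I, hr]; norm_num
  rcases (norm_nonneg (1 - (r : ℂ) * Complex.exp (2 * π * Complex.I * θ))).eq_or_lt with h | h
  · rw [logNormOneSub, ← h, log_zero]; positivity
  · exact log_le_log h hle

lemma log_abs_sin_le_logNormOneSub {r θ : ℝ} (hr : 1 / 4 ≤ r) (hs : sin (π * θ) ≠ 0) :
    log |sin (π * θ)| ≤ logNormOneSub r θ := by
  refine log_le_log (abs_pos.mpr hs) (abs_le_of_sq_le_sq ?_ (norm_nonneg _))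
  rw [sq_norm_one_sub_ofReal_mul_exp]
  nlinarith [sq_nonneg (1 - r), sq_nonneg (sin (π * θ))]

noncomputable def logSinMajorant (θ : ℝ) : ℝ := log 2 + |log (|sin (π * θ)|)|

lemma abs_logNormOneSub_le_logSinMajorant {r θ : ℝ} (hr : 1 / 4 ≤ r) (hr' : r ≤ 1)
    (hs : sin (π * θ) ≠ 0) : |logNormOneSub r θ| ≤ logSinMajorant θ := by
  have hupper := logNormOneSub_le_log_two (abs_le.mpr ⟨by linarith, hr'⟩) θ
  have hlower := log_abs_sin_le_logNormOneSub hr hs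
  have hlog2 : 0 ≤ log 2 := log_nonneg one_le_two
  rw [logSinMajorant, abs_le]
  constructor <;> linarith [neg_abs_le (log |sin (π * θ)|), abs_nonneg (log |sin (π * θ)|)]

lemma continuousAt_logNormOneSub_one {θ : ℝ} (hs : sin (π * θ) ≠ 0) :
    ContinuousAt (fun r => logNormOneSub r θ) 1 := by
  refine ContinuousAt.log (by fun_prop) fun h => hs ?_
  have := sq_norm_one_sub_ofReal_mul_exp 1 θ
  rw [h] at this
  nlinarith [sq_nonneg (sin (π * θ))]

lemma abs_pow_mul_cos_div_natCast_le (r x : ℝ) (m : ℕ) : |r ^ m * cos x / m| ≤ |r| ^ m := by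
  rcases eq_or_ne m 0 with rfl | hm
  · simp
  · have hm' : (1 : ℝ) ≤ m := Nat.one_le_cast.mpr (Nat.one_le_iff_ne_zero.mpr hm)
    rw [abs_div, abs_mul, abs_pow, Nat.abs_cast]
    calc |r| ^ m * |cos x| / m ≤ |r| ^ m * 1 / 1 := by gcongr; exact abs_cos_le_one x
      _ = |r| ^ m := by ring

lemma integral_cos_two_pi_int_mul_add (k : ℤ) (d : ℝ) :
    ∫ θ in (0:ℝ)..1, cos (2 * π * k * θ + d) = if k = 0 then cos d else 0 := by
  split_ifs with hk
  · simp [hk]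
  · have hc : 2 * π * (k : ℝ) ≠ 0 := by simp [hk, pi_ne_zero]
    rw [intervalIntegral.integral_comp_mul_add cos hc, integral_cos, mul_one, mul_zero, zero_add,
      add_comm, mul_comm, sin_add_int_mul_two_pi, sub_self, smul_zero]

lemma integral_cos_mul_cos_shift (n : ℕ) {m : ℕ} (hm : m ≠ 0) (α : ℝ) :
    ∫ θ in (0:ℝ)..1, cos (2 * π * n * θ) * cos (2 * π * m * (θ + α))
      = if n = m then cos (2 * π * m * α) / 2 else 0 := by
  have hprod : ∀ θ : ℝ, cos (2 * π * n * θ) * cos (2 * π * m * (θ + α))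
      = (cos (2 * π * ((n - m : ℤ) : ℝ) * θ + -(2 * π * m * α))
        + cos (2 * π * ((n + m : ℤ) : ℝ) * θ + 2 * π * m * α)) / 2 := by
    intro θ
    push_cast
    rw [show 2 * π * (n - m) * θ + -(2 * π * m * α)
        = 2 * π * n * θ - 2 * π * m * (θ + α) by ring,
      show 2 * π * (n + m) * θ + 2 * π * m * α
        = 2 * π * n * θ + 2 * π * m * (θ + α) by ring,
      cos_sub, cos_add]
    ring
  simp_rw [hprod]
  rw [intervalIntegral.integral_div, intervalIntegral.integral_add
    ((by fun_prop : Continuous _).intervalIntegrable _ _)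
    ((by fun_prop : Continuous _).intervalIntegrable _ _),
    integral_cos_two_pi_int_mul_add, integral_cos_two_pi_int_mul_add]
  have hsum : (n + m : ℤ) ≠ 0 := by omega
  by_cases hnm : n = m
  · simp [hnm, hm]
  · have hdiff : (n - m : ℤ) ≠ 0 := by omega
    simp [hnm, hdiff, hsum]

lemma integral_cos_mul_logNormOneSub {r : ℝ} (hr : |r| < 1) (n : ℕ) (α : ℝ) :
    ∫ θ in (0:ℝ)..1, cos (2 * π * n * θ) * logNormOneSub r (θ + α)
      = -(r ^ n * cos (2 * π * n * α) / (2 * n)) := by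
  have hterm : ∀ m : ℕ,
      ∫ θ in (0:ℝ)..1, cos (2 * π * n * θ) * -(r ^ m * cos (2 * π * m * (θ + α)) / m)
        = if m = n then -(r ^ n * cos (2 * π * n * α) / (2 * n)) else 0 := by
    intro m
    rcases eq_or_ne m 0 with rfl | hm
    -- both sides vanish through the junk value `x / 0 = 0`
    · split_ifs with h
      · simp [← h]
      · simp
    · simp_rw [show ∀ θ, cos (2 * π * n * θ) * -(r ^ m * cos (2 * π * m * (θ + α)) / m)
          = -(r ^ m / m) * (cos (2 * π * n * θ) * cos (2 * π * m * (θ + α))) by intro; ring]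
      rw [intervalIntegral.integral_const_mul, integral_cos_mul_cos_shift n hm]
      by_cases hmn : m = n
      · subst hmn
        rw [if_pos rfl, if_pos rfl]
        ring
      · rw [if_neg (Ne.symm hmn), if_neg hmn, mul_zero]
  have hsum := intervalIntegral.hasSum_integral_of_dominated_convergence
    (F := fun (m : ℕ) θ => cos (2 * π * n * θ) * -(r ^ m * cos (2 * π * m * (θ + α)) / m))
    (f := fun θ => cos (2 * π * n * θ) * logNormOneSub r (θ + α))
    (μ := volume) (a := 0) (b := 1)
    (fun m _ => |r| ^ m)
    (fun m => (by fun_prop : Continuous _).aestronglyMeasurable)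
    (fun m => Eventually.of_forall fun θ _ => by
      rw [norm_mul, norm_neg, Real.norm_eq_abs, Real.norm_eq_abs]
      exact (mul_le_of_le_one_left (abs_nonneg _) (abs_cos_le_one _)).trans
        (abs_pow_mul_cos_div_natCast_le _ _ _))
    (Eventually.of_forall fun _ _ => summable_geometric_of_lt_one (abs_nonneg r) hr)
    intervalIntegrable_const
    (Eventually.of_forall fun θ _ => (hasSum_logNormOneSub hr (θ + α)).mul_left _)
  simp only [hterm] at hsum
  exact hsum.unique (hasSum_ite_eq n _)

lemma hasSum_integral_logNormOneSub_mul_shift {r : ℝ} (hr : |r| < 1) (α : ℝ) :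
    HasSum (fun n : ℕ => r ^ (2 * n) * cos (2 * π * n * α) / (2 * n ^ 2))
      (∫ θ in (0:ℝ)..1, logNormOneSub r θ * logNormOneSub r (θ + α)) := by
  have hL := continuous_logNormOneSub hr
  have hsum := intervalIntegral.hasSum_integral_of_dominated_convergence
    (F := fun (n : ℕ) θ => -(r ^ n * cos (2 * π * n * θ) / n) * logNormOneSub r (θ + α))
    (μ := volume) (a := 0) (b := 1)
    (fun n θ => |r| ^ n * |logNormOneSub r (θ + α)|)
    (fun n => (by fun_prop : Continuous _).aestronglyMeasurable)
    (fun n => Eventually.of_forall fun θ _ => by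
      rw [norm_mul, norm_neg, Real.norm_eq_abs, Real.norm_eq_abs]
      gcongr
      exact abs_pow_mul_cos_div_natCast_le _ _ _)
    (Eventually.of_forall fun _ _ =>
      (summable_geometric_of_lt_one (abs_nonneg r) hr).mul_right _)
    (by simp_rw [tsum_mul_right]; exact (by fun_prop : Continuous _).intervalIntegrable _ _)
    (Eventually.of_forall fun θ _ => (hasSum_logNormOneSub hr θ).mul_right _)
  suffices hterm : ∀ n : ℕ,
      ∫ θ in (0:ℝ)..1, -(r ^ n * cos (2 * π * n * θ) / n) * logNormOneSub r (θ + α)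
        = r ^ (2 * n) * cos (2 * π * n * α) / (2 * n ^ 2) by simpa only [hterm] using hsum
  intro n
  simp_rw [show ∀ θ, -(r ^ n * cos (2 * π * n * θ) / n) * logNormOneSub r (θ + α)
      = -(r ^ n / n) * (cos (2 * π * n * θ) * logNormOneSub r (θ + α)) by intro; ring]
  rw [intervalIntegral.integral_const_mul, integral_cos_mul_logNormOneSub hr]
  ring

lemma logSinMajorant_nonneg (θ : ℝ) : 0 ≤ logSinMajorant θ :=
  add_nonneg (log_nonneg one_le_two) (abs_nonneg _)

lemma logSinMajorant_periodic : Function.Periodic logSinMajorant 1 := fun θ => by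
  rw [logSinMajorant, logSinMajorant, mul_add, mul_one, sin_add_pi, abs_neg]

lemma measurable_logSinMajorant : Measurable logSinMajorant := by
  unfold logSinMajorant
  fun_prop

lemma neg_log_le_four_mul_rpow {x : ℝ} (hx : 0 < x) : -log x ≤ 4 * x ^ (-(1 / 4) : ℝ) := by
  have := log_le_rpow_div (inv_nonneg.mpr hx.le) (by norm_num : (0 : ℝ) < 1 / 4)
  rw [log_inv, inv_rpow hx.le, ← rpow_neg hx.le, div_eq_mul_inv, mul_comm] at this
  convert this using 2
  norm_num

lemma two_mul_mul_one_sub_le_sin_pi_mul {θ : ℝ} (h0 : 0 ≤ θ) (h1 : θ ≤ 1) :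
    2 * θ * (1 - θ) ≤ sin (π * θ) := by
  wlog hθ : θ ≤ 1 / 2 generalizing θ
  · have := this (θ := 1 - θ) (by linarith) (by linarith) (by linarith)
    rwa [show π * (1 - θ) = π - π * θ by ring, sin_pi_sub, sub_sub_cancel, mul_right_comm]
      at this
  have hjordan := mul_le_sin (mul_nonneg pi_pos.le h0) (by nlinarith [pi_pos])
  rw [show 2 / π * (π * θ) = 2 * θ by field_simp] at hjordan
  nlinarith

lemma logSinMajorant_le {θ : ℝ} (h0 : 0 < θ) (h1 : θ < 1) :
    logSinMajorant θ ≤ 4 * θ ^ (-(1 / 4) : ℝ) + 4 * (1 - θ) ^ (-(1 / 4) : ℝ) := by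
  have hsin := two_mul_mul_one_sub_le_sin_pi_mul h0.le h1.le
  have hpos : 0 < 2 * θ * (1 - θ) := by nlinarith
  have hlog := log_le_log hpos hsin
  rw [log_mul (by positivity) (by linarith), log_mul two_ne_zero h0.ne'] at hlog
  have hsin_pos : 0 < sin (π * θ) := hpos.trans_le hsin
  rw [logSinMajorant, abs_of_pos hsin_pos, abs_of_nonpos (log_nonpos hsin_pos.le (sin_le_one _))]
  linarith [neg_log_le_four_mul_rpow h0, neg_log_le_four_mul_rpow (sub_pos.mpr h1)]

lemma sq_logSinMajorant_le {θ : ℝ} (h0 : 0 < θ) (h1 : θ < 1) :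
    logSinMajorant θ ^ 2 ≤ 32 * (θ ^ (-(1 / 2) : ℝ) + (1 - θ) ^ (-(1 / 2) : ℝ)) := by
  have hsq : ∀ x : ℝ, 0 < x → (x ^ (-(1 / 4) : ℝ)) ^ 2 = x ^ (-(1 / 2) : ℝ) := fun x hx => by
    rw [← rpow_natCast, ← rpow_mul hx.le]; norm_num
  have hle := logSinMajorant_le h0 h1
  have := logSinMajorant_nonneg θ
  rw [← hsq θ h0, ← hsq (1 - θ) (sub_pos.mpr h1)]
  nlinarith [sq_nonneg (θ ^ (-(1 / 4) : ℝ) - (1 - θ) ^ (-(1 / 4) : ℝ))]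

lemma intervalIntegrable_sq_logSinMajorant (a b : ℝ) :
    IntervalIntegrable (fun θ => logSinMajorant θ ^ 2) volume a b := by
  refine (logSinMajorant_periodic.comp (· ^ 2)).intervalIntegrable₀ one_ne_zero ?_ a b
  have hrpow : IntervalIntegrable (fun θ : ℝ => θ ^ (-(1 / 2) : ℝ)) volume 0 1 :=
    intervalIntegral.intervalIntegrable_rpow' (by norm_num)
  have hdom : IntervalIntegrable
      (fun θ : ℝ => 32 * (θ ^ (-(1 / 2) : ℝ) + (1 - θ) ^ (-(1 / 2) : ℝ))) volume 0 1 :=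
    (hrpow.add (by simpa using (hrpow.comp_sub_left 1).symm)).const_mul 32
  rw [intervalIntegrable_iff_integrableOn_Ioo_of_le zero_le_one] at hdom ⊢
  refine hdom.mono' (measurable_logSinMajorant.pow_const 2).aestronglyMeasurable ?_
  filter_upwards [ae_restrict_mem measurableSet_Ioo] with θ hθ
  rw [Function.comp_apply, Real.norm_of_nonneg (sq_nonneg _)]
  exact sq_logSinMajorant_le hθ.1 hθ.2

lemma ae_sin_pi_mul_add_ne_zero (α : ℝ) : ∀ᵐ θ : ℝ, sin (π * (θ + α)) ≠ 0 := by
  rw [ae_iff]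
  refine measure_mono_null (fun θ hθ => ?_)
    ((Set.countable_range fun n : ℤ => (n : ℝ) - α).measure_zero volume)
  obtain ⟨n, hn⟩ := sin_eq_zero_iff.mp (not_not.mp hθ)
  refine ⟨n, ?_⟩
  have : (n : ℝ) = θ + α := mul_right_cancel₀ pi_ne_zero (by rw [hn]; ring)
  simp only [this, add_sub_cancel_right]

lemma tendsto_integral_logNormOneSub_mul_shift (α : ℝ) :
    Tendsto (fun r => ∫ θ in (0:ℝ)..1, logNormOneSub r θ * logNormOneSub r (θ + α)) (𝓝[<] 1)
      (𝓝 (∫ θ in (0:ℝ)..1, logNormOneSub 1 θ * logNormOneSub 1 (θ + α))) := by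
  have hr : ∀ᶠ r in 𝓝[<] (1 : ℝ), r ∈ Set.Ioo (1 / 4) 1 := Ioo_mem_nhdsLT (by norm_num)
  have hsin : ∀ᵐ θ : ℝ, sin (π * θ) ≠ 0 ∧ sin (π * (θ + α)) ≠ 0 := by
    filter_upwards [ae_sin_pi_mul_add_ne_zero 0, ae_sin_pi_mul_add_ne_zero α] with θ h0 hα
    exact ⟨by simpa using h0, hα⟩
  refine intervalIntegral.tendsto_integral_filter_of_dominated_convergence
    (fun θ => (logSinMajorant θ ^ 2 + logSinMajorant (θ + α) ^ 2) / 2) ?_ ?_ ?_ ?_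
  · filter_upwards [hr] with r hr
    have hL := continuous_logNormOneSub (abs_lt.mpr ⟨by linarith [hr.1], hr.2⟩)
    exact (by fun_prop : Continuous _).aestronglyMeasurable
  · filter_upwards [hr] with r hr
    filter_upwards [hsin] with θ ⟨hs0, hsα⟩ _
    rw [norm_mul, Real.norm_eq_abs, Real.norm_eq_abs]
    calc |logNormOneSub r θ| * |logNormOneSub r (θ + α)|
        ≤ logSinMajorant θ * logSinMajorant (θ + α) :=
          mul_le_mul (abs_logNormOneSub_le_logSinMajorant hr.1.le hr.2.le hs0)
            (abs_logNormOneSub_le_logSinMajorant hr.1.le hr.2.le hsα) (abs_nonneg _)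
            (logSinMajorant_nonneg θ)
      _ ≤ (logSinMajorant θ ^ 2 + logSinMajorant (θ + α) ^ 2) / 2 := by
          linarith [two_mul_le_add_sq (logSinMajorant θ) (logSinMajorant (θ + α))]
  · refine ((intervalIntegrable_sq_logSinMajorant 0 1).add ?_).div_const 2
    simpa using (intervalIntegrable_sq_logSinMajorant α (1 + α)).comp_add_right α
  · filter_upwards [hsin] with θ ⟨hs0, hsα⟩ _
    exact ((continuousAt_logNormOneSub_one hs0).tendsto.mul
      (continuousAt_logNormOneSub_one hsα).tendsto).mono_left nhdsWithin_le_nhds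

lemma tendsto_tsum_pow_mul_cos_div_sq (α : ℝ) :
    Tendsto (fun r : ℝ => ∑' n : ℕ, r ^ (2 * n) * cos (2 * π * n * α) / (2 * n ^ 2)) (𝓝[<] 1)
      (𝓝 (∑' n : ℕ, cos (2 * π * n * α) / (2 * n ^ 2))) := by
  refine tendsto_tsum_of_dominated_convergence (bound := fun n : ℕ => 1 / (n : ℝ) ^ 2)
    (summable_one_div_nat_pow.mpr one_lt_two) (fun n => ?_) ?_
  · have : ContinuousAt (fun r : ℝ => r ^ (2 * n) * cos (2 * π * n * α) / (2 * n ^ 2)) 1 := by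
      fun_prop
    simpa using this.tendsto.mono_left nhdsWithin_le_nhds
  · filter_upwards [Ioo_mem_nhdsLT (show (-1 : ℝ) < 1 by norm_num)] with r hr n
    rcases eq_or_ne n 0 with rfl | hn
    · simp
    have hn' : (0 : ℝ) < (n : ℝ) ^ 2 := by positivity
    rw [Real.norm_eq_abs, abs_div, abs_mul, abs_pow,
      abs_of_pos (by positivity : (0 : ℝ) < 2 * n ^ 2)]
    calc |r| ^ (2 * n) * |cos (2 * π * n * α)| / (2 * n ^ 2) ≤ 1 * 1 / (1 * n ^ 2) := by
          gcongr
          · exact pow_le_one₀ (abs_nonneg r) (abs_lt.mpr hr).le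
          · exact abs_cos_le_one _
          · norm_num
      _ = 1 / (n : ℝ) ^ 2 := by ring

lemma hasSum_cos_div_two_mul_sq {α : ℝ} (h0 : 0 ≤ α) (h1 : α ≤ 1) :
    HasSum (fun n : ℕ => cos (2 * π * n * α) / (2 * n ^ 2))
      (π ^ 2 / 2 * (α ^ 2 - α + 1 / 6)) := by
  have h := (hasSum_one_div_nat_pow_mul_cos one_ne_zero ⟨h0, h1⟩).div_const 2
  have hval : π ^ 2 / 2 * (α ^ 2 - α + 1 / 6) = (-1) ^ (1 + 1) * (2 * π) ^ (2 * 1) / 2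
      / (2 * 1).factorial
      * (Polynomial.map (algebraMap ℚ ℝ) (Polynomial.bernoulli (2 * 1))).eval α / 2 := by
    simp [Polynomial.bernoulli, Finset.sum_range_succ, bernoulli_two, Nat.factorial]
    ring
  rw [hval]
  exact h.congr_fun fun n => by ring

open Real in
theorem mahler_linear_pair (α : ℝ) (h0 : 0 ≤ α) (h1 : α ≤ 1) :
    ∫ θ in (0:ℝ)..1,
        Real.log ‖1 - Complex.exp (2 * π * Complex.I * θ)‖ *
        Real.log ‖1 - Complex.exp (2 * π * Complex.I * (θ + α))‖ =
    (π^2 / 2) * (α^2 - α + 1/6) := by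
  have hregular : ∀ᶠ r in 𝓝[<] (1 : ℝ),
      ∑' n : ℕ, r ^ (2 * n) * cos (2 * π * n * α) / (2 * n ^ 2)
        = ∫ θ in (0:ℝ)..1, logNormOneSub r θ * logNormOneSub r (θ + α) := by
    filter_upwards [Ioo_mem_nhdsLT (show (-1 : ℝ) < 1 by norm_num)] with r hr
    exact (hasSum_integral_logNormOneSub_mul_shift (abs_lt.mpr hr) α).tsum_eq
  have hlimit : ∫ θ in (0:ℝ)..1, logNormOneSub 1 θ * logNormOneSub 1 (θ + α)
      = ∑' n : ℕ, cos (2 * π * n * α) / (2 * n ^ 2) :=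
    tendsto_nhds_unique (tendsto_integral_logNormOneSub_mul_shift α)
      ((tendsto_tsum_pow_mul_cos_div_sq α).congr' hregular)
  simpa only [logNormOneSub, Complex.ofReal_one, Complex.ofReal_add, one_mul,
    (hasSum_cos_div_two_mul_sq h0 h1).tsum_eq] using hlimit
end

section
/- The second higher Mahler measure satisfies m₂(x−1) := ∫_0^1 log²|e^{2πiθ}−1| dθ = π²/12. -/
/-!
For `|r| < 1`, the power series of `-log (1 - r e(θ))` gives the Fourier expansion
`log |1 - r e(θ)| = -∑_{k ≥ 1} r^k cos (2πkθ) / k`, which converges absolutely and uniformly, so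
orthogonality of the cosines gives `∫₀¹ log² |1 - r e(θ)| dθ = ∑_{k ≥ 1} r^{2k} / (2k²)`.
As `r → 1⁻` the right-hand side tends to `ζ(2) / 2 = π² / 12`. On the left, Fatou's lemma shows
that `log² |1 - e(θ)|` is integrable, and dominated convergence then applies because
`|1 - e(θ)| ≤ 2 |1 - r e(θ)| ≤ 4` for `0 ≤ r ≤ 1`.
-/

open Real MeasureTheory Filter Topology Set

section Orthogonal

variable {ι α : Type*} [Countable ι] [MeasurableSpace α] {μ : Measure α} [IsFiniteMeasure μ]
  {g : ι → α → ℝ} {f : α → ℝ} {b : ι → ℝ}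

theorem hasSum_integral_sq_of_orthogonal (hg : ∀ k, AEStronglyMeasurable (g k) μ)
    (hf : AEStronglyMeasurable f μ) (hgb : ∀ k x, |g k x| ≤ b k) (hb : Summable b)
    (hgf : ∀ x, HasSum (fun k ↦ g k x) (f x))
    (horth : Pairwise fun j k ↦ ∫ x, g j x * g k x ∂μ = 0) :
    HasSum (fun k ↦ ∫ x, g k x ^ 2 ∂μ) (∫ x, f x ^ 2 ∂μ) := by
  have hfb (x : α) : |f x| ≤ ∑' k, b k := (hgf x).norm_le_of_bounded hb.hasSum (hgb · x)
  have hcoeff (k : ι) : ∫ x, f x * g k x ∂μ = ∫ x, g k x ^ 2 ∂μ := by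
    have hsum := hasSum_integral_of_dominated_convergence (F := fun j x ↦ g j x * g k x)
      (fun j _ ↦ b j * b k) (fun j ↦ (hg j).mul (hg k))
      (fun j ↦ ae_of_all _ fun x ↦ by
        rw [norm_mul]
        exact mul_le_mul (hgb j x) (hgb k x) (norm_nonneg _) ((abs_nonneg _).trans (hgb j x)))
      (ae_of_all _ fun _ ↦ hb.mul_right _) (integrable_const _)
      (ae_of_all _ fun x ↦ (hgf x).mul_right (g k x))
    simpa [sq] using hsum.unique (hasSum_single k fun j hj ↦ horth hj)
  have hsum := hasSum_integral_of_dominated_convergence (F := fun k x ↦ f x * g k x)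
    (fun k _ ↦ (∑' j, b j) * b k) (fun k ↦ hf.mul (hg k))
    (fun k ↦ ae_of_all _ fun x ↦ by
      rw [norm_mul]
      exact mul_le_mul (hfb x) (hgb k x) (norm_nonneg _) ((abs_nonneg _).trans (hfb x)))
    (ae_of_all _ fun _ ↦ hb.mul_left _) (integrable_const _)
    (ae_of_all _ fun x ↦ (hgf x).mul_left (f x))
  simpa only [hcoeff, sq] using hsum

end Orthogonal

theorem integral_cos_two_pi_int_mul {m : ℤ} (hm : m ≠ 0) :
    ∫ θ in (0 : ℝ)..1, cos (2 * π * m * θ) = 0 := by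
  have hc : 2 * π * m ≠ 0 := by positivity
  rw [intervalIntegral.integral_comp_mul_left (fun x ↦ cos x) hc, integral_cos,
    mul_one, mul_zero, sin_zero, sub_zero, show 2 * π * m = (2 * m : ℤ) * π by push_cast; ring,
    sin_int_mul_pi, smul_zero]

theorem integral_cos_mul_cos (j : ℕ) {k : ℕ} (hk : k ≠ 0) :
    ∫ θ in (0 : ℝ)..1, cos (2 * π * j * θ) * cos (2 * π * k * θ) = if j = k then 1 / 2 else 0 := by
  have hprod (θ : ℝ) : cos (2 * π * j * θ) * cos (2 * π * k * θ) =
      (cos (2 * π * ((j - k : ℤ) : ℝ) * θ) + cos (2 * π * ((j + k : ℤ) : ℝ) * θ)) / 2 := by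
    push_cast
    rw [show 2 * π * (j - k : ℝ) * θ = 2 * π * j * θ - 2 * π * k * θ by ring,
      show 2 * π * (j + k : ℝ) * θ = 2 * π * j * θ + 2 * π * k * θ by ring,
      ← two_mul_cos_mul_cos]
    ring
  have hcont (m : ℤ) : IntervalIntegrable (fun θ ↦ cos (2 * π * m * θ)) volume 0 1 :=
    (by fun_prop : Continuous fun θ : ℝ ↦ cos (2 * π * m * θ)).intervalIntegrable 0 1
  simp_rw [hprod]
  rw [intervalIntegral.integral_div, intervalIntegral.integral_add (hcont _) (hcont _),
    integral_cos_two_pi_int_mul (m := j + k) (by omega)]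
  split_ifs with hjk
  · simp [hjk]
  · rw [integral_cos_two_pi_int_mul (by omega)]
    simp

noncomputable def cexpTwoPiI (θ : ℝ) : ℂ := Complex.exp (2 * π * Complex.I * θ)

theorem cexpTwoPiI_pow (θ : ℝ) (k : ℕ) :
    cexpTwoPiI θ ^ k = Complex.exp ((2 * π * k * θ : ℝ) * Complex.I) := by
  rw [cexpTwoPiI, ← Complex.exp_nat_mul]
  push_cast
  ring_nf

theorem norm_cexpTwoPiI (θ : ℝ) : ‖cexpTwoPiI θ‖ = 1 := by
  rw [← pow_one (cexpTwoPiI θ), cexpTwoPiI_pow, Complex.norm_exp_ofReal_mul_I]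

theorem re_cexpTwoPiI_pow (θ : ℝ) (k : ℕ) : (cexpTwoPiI θ ^ k).re = cos (2 * π * k * θ) := by
  rw [cexpTwoPiI_pow, Complex.exp_ofReal_mul_I_re]

theorem cexpTwoPiI_ne_one {θ : ℝ} (hθ : θ ∈ Ioo 0 1) : cexpTwoPiI θ ≠ 1 := by
  rw [cexpTwoPiI, Ne, Complex.exp_eq_one_iff]
  rintro ⟨m, hm⟩
  have hθm : θ = m := by
    have h2πI : 2 * π * Complex.I ≠ 0 := by simp [Real.pi_ne_zero]
    exact_mod_cast mul_left_cancel₀ h2πI (hm.trans (mul_comm _ _))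
  obtain ⟨h0, h1⟩ := hθ
  rw [hθm] at h0 h1
  norm_cast at h0 h1
  omega

noncomputable def logAbsOneSub (r θ : ℝ) : ℝ := log ‖1 - r * cexpTwoPiI θ‖

-- The `k = 0` term is `0` because `r ^ 0 / 0 = 0`.
noncomputable def logAbsOneSubTerm (r : ℝ) (k : ℕ) (θ : ℝ) : ℝ :=
  -(r ^ k / k * cos (2 * π * k * θ))

theorem hasSum_logAbsOneSubTerm {r : ℝ} (hr : |r| < 1) (θ : ℝ) :
    HasSum (fun k ↦ logAbsOneSubTerm r k θ) (logAbsOneSub r θ) := by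
  have hz : ‖(r : ℂ) * cexpTwoPiI θ‖ < 1 := by
    rwa [norm_mul, norm_cexpTwoPiI, mul_one, Complex.norm_real, Real.norm_eq_abs]
  have hre (k : ℕ) : (((r : ℂ) * cexpTwoPiI θ) ^ k / k).re = r ^ k / k * cos (2 * π * k * θ) := by
    rw [mul_pow, mul_div_right_comm, ← Complex.ofReal_pow, ← Complex.ofReal_natCast,
      ← Complex.ofReal_div, Complex.re_ofReal_mul, re_cexpTwoPiI_pow]
  have h := (Complex.hasSum_re (Complex.hasSum_taylorSeries_neg_log hz)).neg
  simp only [hre, Complex.neg_re, neg_neg, Complex.log_re] at h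
  exact h

theorem abs_logAbsOneSubTerm_le (r : ℝ) (k : ℕ) (θ : ℝ) : |logAbsOneSubTerm r k θ| ≤ |r| ^ k := by
  rw [logAbsOneSubTerm, abs_neg, abs_mul, abs_div, abs_pow, Nat.abs_cast]
  calc |r| ^ k / k * |cos (2 * π * k * θ)| ≤ |r| ^ k / k * 1 := by gcongr; exact abs_cos_le_one _
    _ ≤ |r| ^ k := by
      rcases k.eq_zero_or_pos with rfl | hk
      · simp
      · rw [mul_one]; exact div_le_self (by positivity) (by exact_mod_cast hk)

theorem measurable_logAbsOneSub (r : ℝ) : Measurable (logAbsOneSub r) := by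
  unfold logAbsOneSub cexpTwoPiI; fun_prop

theorem continuous_logAbsOneSubTerm (r : ℝ) (k : ℕ) : Continuous (logAbsOneSubTerm r k) := by
  unfold logAbsOneSubTerm; fun_prop

theorem integral_logAbsOneSubTerm_mul (r : ℝ) (j k : ℕ) :
    ∫ θ in Ioo 0 1, logAbsOneSubTerm r j θ * logAbsOneSubTerm r k θ =
      if j = k then r ^ (2 * k) / (2 * k ^ 2) else 0 := by
  rw [← integral_Ioc_eq_integral_Ioo, ← intervalIntegral.integral_of_le zero_le_one]
  rcases eq_or_ne k 0 with rfl | hk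
  · simp [logAbsOneSubTerm]
  have hprod (θ : ℝ) : logAbsOneSubTerm r j θ * logAbsOneSubTerm r k θ =
      r ^ j / j * (r ^ k / k) * (cos (2 * π * j * θ) * cos (2 * π * k * θ)) := by
    simp only [logAbsOneSubTerm]; ring
  simp_rw [hprod]
  rw [intervalIntegral.integral_const_mul, integral_cos_mul_cos j hk]
  split_ifs with hjk
  · subst hjk; ring
  · rw [mul_zero]

theorem hasSum_integral_sq_logAbsOneSub {r : ℝ} (hr : |r| < 1) :
    HasSum (fun k : ℕ ↦ r ^ (2 * k) / (2 * k ^ 2)) (∫ θ in Ioo 0 1, logAbsOneSub r θ ^ 2) := by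
  have h := hasSum_integral_sq_of_orthogonal (μ := volume.restrict (Ioo 0 1))
    (fun k ↦ (continuous_logAbsOneSubTerm r k).aestronglyMeasurable)
    (measurable_logAbsOneSub r).aestronglyMeasurable (abs_logAbsOneSubTerm_le r)
    (summable_geometric_of_lt_one (abs_nonneg r) hr) (hasSum_logAbsOneSubTerm hr)
    (fun j k hjk ↦ (integral_logAbsOneSubTerm_mul r j k).trans (if_neg hjk))
  simpa only [sq, integral_logAbsOneSubTerm_mul, if_true] using h

theorem abs_logAbsOneSub_le {r : ℝ} (hr : |r| < 1) (θ : ℝ) : |logAbsOneSub r θ| ≤ (1 - |r|)⁻¹ :=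
  (hasSum_logAbsOneSubTerm hr θ).norm_le_of_bounded
    (hasSum_geometric_of_lt_one (abs_nonneg r) hr) (abs_logAbsOneSubTerm_le r · θ)

theorem integrableOn_sq_logAbsOneSub {r : ℝ} (hr : |r| < 1) :
    IntegrableOn (fun θ ↦ logAbsOneSub r θ ^ 2) (Ioo 0 1) :=
  Integrable.of_bound ((measurable_logAbsOneSub r).pow_const 2).aestronglyMeasurable
    ((1 - |r|)⁻¹ ^ 2)
    (ae_of_all _ fun θ ↦ by
      rw [norm_pow, Real.norm_eq_abs]
      exact pow_le_pow_left₀ (abs_nonneg _) (abs_logAbsOneSub_le hr θ) 2)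

theorem tendsto_tsum_pow_div_sq {β : Type*} {l : Filter β} {r : β → ℝ} (hr1 : ∀ n, |r n| ≤ 1)
    (hr : Tendsto r l (𝓝 1)) :
    Tendsto (fun n ↦ ∑' k : ℕ, r n ^ (2 * k) / (2 * k ^ 2)) l (𝓝 (π ^ 2 / 12)) := by
  have hζ : HasSum (fun k : ℕ ↦ 1 / (2 * (k : ℝ) ^ 2)) (π ^ 2 / 12) := by
    have h := hasSum_zeta_two.div_const 2
    rw [show π ^ 2 / 6 / 2 = π ^ 2 / 12 by ring] at h
    simpa only [div_div, mul_comm] using h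
  rw [← hζ.tsum_eq]
  refine tendsto_tsum_of_dominated_convergence hζ.summable (fun k ↦ ?_)
    (Eventually.of_forall fun n k ↦ ?_)
  · simpa only [one_pow] using (hr.pow (2 * k)).div_const (2 * (k : ℝ) ^ 2)
  · rw [norm_div, norm_pow, Real.norm_eq_abs, Real.norm_of_nonneg (by positivity)]
    exact div_le_div_of_nonneg_right (pow_le_one₀ (abs_nonneg _) (hr1 n)) (by positivity)

theorem tendsto_integral_sq_logAbsOneSub_of_abs_lt_one {β : Type*} {l : Filter β} {r : β → ℝ}
    (hr1 : ∀ n, |r n| < 1) (hr : Tendsto r l (𝓝 1)) :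
    Tendsto (fun n ↦ ∫ θ in Ioo 0 1, logAbsOneSub (r n) θ ^ 2) l (𝓝 (π ^ 2 / 12)) := by
  simpa only [fun n ↦ (hasSum_integral_sq_logAbsOneSub (hr1 n)).tsum_eq]
    using tendsto_tsum_pow_div_sq (fun n ↦ (hr1 n).le) hr

theorem norm_one_sub_mul_le_two {z : ℂ} (hz : ‖z‖ ≤ 1) {r : ℝ} (hr : |r| ≤ 1) :
    ‖1 - r * z‖ ≤ 2 :=
  calc ‖1 - r * z‖ ≤ ‖(1 : ℂ)‖ + ‖(r : ℂ)‖ * ‖z‖ := (norm_sub_le _ _).trans_eq (by rw [norm_mul])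
    _ ≤ 1 + 1 * 1 := by
      rw [norm_one, Complex.norm_real, Real.norm_eq_abs]
      gcongr
    _ = 2 := by norm_num

theorem norm_one_sub_le_two_mul_norm_one_sub_mul {z : ℂ} (hz : ‖z‖ = 1) {r : ℝ} (hr0 : 0 ≤ r)
    (hr1 : r ≤ 1) : ‖1 - z‖ ≤ 2 * ‖1 - r * z‖ := by
  have hrz : 1 - r ≤ ‖1 - r * z‖ := by
    simpa [hz, abs_of_nonneg hr0] using norm_sub_norm_le (1 : ℂ) (r * z)
  calc ‖1 - z‖ = ‖(1 - r * z) - (1 - r : ℝ) * z‖ := by push_cast; ring_nf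
    _ ≤ ‖1 - r * z‖ + ‖((1 - r : ℝ) : ℂ) * z‖ := norm_sub_le _ _
    _ = ‖1 - r * z‖ + (1 - r) := by
      rw [norm_mul, hz, mul_one, Complex.norm_real, Real.norm_of_nonneg (sub_nonneg.2 hr1)]
    _ ≤ 2 * ‖1 - r * z‖ := by linarith

theorem sq_log_le_of_le_two_mul {x y : ℝ} (hy : 0 < y) (hyx : y ≤ 2 * x) (hx2 : x ≤ 2) :
    log x ^ 2 ≤ 2 * log y ^ 2 + 2 * log 2 ^ 2 := by
  have hx : 0 < x := by linarith
  have hlow : log y ≤ log 2 + log x := by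
    rw [← log_mul two_ne_zero hx.ne']
    exact log_le_log hy hyx
  have hup : log x ≤ log 2 := log_le_log hx hx2
  have habs : |log x| ≤ |log y| + log 2 :=
    abs_le.2 ⟨by linarith [neg_abs_le (log y)], by linarith [abs_nonneg (log y)]⟩
  nlinarith [sq_abs (log x), sq_abs (log y), sq_nonneg (|log y| - log 2), abs_nonneg (log x)]

theorem sq_logAbsOneSub_le {r θ : ℝ} (hr0 : 0 ≤ r) (hr1 : r ≤ 1) (hθ : cexpTwoPiI θ ≠ 1) :
    logAbsOneSub r θ ^ 2 ≤ 2 * logAbsOneSub 1 θ ^ 2 + 2 * log 2 ^ 2 := by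
  rw [logAbsOneSub, logAbsOneSub, Complex.ofReal_one, one_mul]
  exact sq_log_le_of_le_two_mul (norm_pos_iff.2 (sub_ne_zero.2 hθ.symm))
    (norm_one_sub_le_two_mul_norm_one_sub_mul (norm_cexpTwoPiI θ) hr0 hr1)
    (norm_one_sub_mul_le_two (norm_cexpTwoPiI θ).le (abs_le.2 ⟨by linarith, hr1⟩))

theorem continuousAt_logAbsOneSub_one {θ : ℝ} (hθ : cexpTwoPiI θ ≠ 1) :
    ContinuousAt (logAbsOneSub · θ) 1 := by
  refine ContinuousAt.log (by unfold cexpTwoPiI; fun_prop) ?_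
  simpa [sub_eq_zero] using hθ.symm

theorem ae_tendsto_sq_logAbsOneSub {r : ℕ → ℝ} (hr : Tendsto r atTop (𝓝 1)) :
    ∀ᵐ θ ∂volume.restrict (Ioo 0 1),
      Tendsto (fun n ↦ logAbsOneSub (r n) θ ^ 2) atTop (𝓝 (logAbsOneSub 1 θ ^ 2)) := by
  filter_upwards [ae_restrict_mem measurableSet_Ioo] with θ hθ
  exact (((continuousAt_logAbsOneSub_one (cexpTwoPiI_ne_one hθ)).tendsto.comp hr).pow 2)

theorem integrableOn_sq_logAbsOneSub_one :
    IntegrableOn (fun θ ↦ logAbsOneSub 1 θ ^ 2) (Ioo 0 1) := by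
  obtain ⟨r, -, hr01, hr⟩ := exists_seq_strictMono_tendsto' (zero_lt_one' ℝ)
  have hr1 (n : ℕ) : |r n| < 1 := abs_lt.2 ⟨by linarith [(hr01 n).1], (hr01 n).2⟩
  refine integrable_of_tendsto (ae_tendsto_sq_logAbsOneSub hr)
    (fun n ↦ ((measurable_logAbsOneSub _).pow_const 2).aestronglyMeasurable) ?_
  have hlint (n : ℕ) : ∫⁻ θ in Ioo 0 1, ‖logAbsOneSub (r n) θ ^ 2‖ₑ =
      ENNReal.ofReal (∫ θ in Ioo 0 1, logAbsOneSub (r n) θ ^ 2) := by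
    rw [← ofReal_integral_norm_eq_lintegral_enorm (integrableOn_sq_logAbsOneSub (hr1 n))]
    simp only [norm_pow, Real.norm_eq_abs, sq_abs]
  simp_rw [hlint]
  rw [(ENNReal.tendsto_ofReal (tendsto_integral_sq_logAbsOneSub_of_abs_lt_one hr1 hr)).liminf_eq]
  exact ENNReal.ofReal_ne_top

theorem tendsto_integral_sq_logAbsOneSub {r : ℕ → ℝ} (hr0 : ∀ n, 0 ≤ r n) (hr1 : ∀ n, r n ≤ 1)
    (hr : Tendsto r atTop (𝓝 1)) :
    Tendsto (fun n ↦ ∫ θ in Ioo 0 1, logAbsOneSub (r n) θ ^ 2) atTop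
      (𝓝 (∫ θ in Ioo 0 1, logAbsOneSub 1 θ ^ 2)) :=
  tendsto_integral_of_dominated_convergence (fun θ ↦ 2 * logAbsOneSub 1 θ ^ 2 + 2 * log 2 ^ 2)
    (fun n ↦ ((measurable_logAbsOneSub _).pow_const 2).aestronglyMeasurable)
    ((integrableOn_sq_logAbsOneSub_one.const_mul 2).add (integrable_const _))
    (fun n ↦ by
      filter_upwards [ae_restrict_mem measurableSet_Ioo] with θ hθ
      rw [norm_pow, Real.norm_eq_abs, sq_abs]
      exact sq_logAbsOneSub_le (hr0 n) (hr1 n) (cexpTwoPiI_ne_one hθ))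
    (ae_tendsto_sq_logAbsOneSub hr)

open Real in
theorem m2_x_sub_one :
    ∫ θ in (0:ℝ)..1,
        (Real.log ‖Complex.exp (2 * π * Complex.I * θ) - 1‖)^2 = π^2 / 12 := by
  obtain ⟨r, -, hr01, hr⟩ := exists_seq_strictMono_tendsto' (zero_lt_one' ℝ)
  have hlim := tendsto_integral_sq_logAbsOneSub (fun n ↦ (hr01 n).1.le) (fun n ↦ (hr01 n).2.le) hr
  have hpi := tendsto_integral_sq_logAbsOneSub_of_abs_lt_one
    (fun n ↦ abs_lt.2 ⟨by linarith [(hr01 n).1], (hr01 n).2⟩) hr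
  rw [intervalIntegral.integral_of_le zero_le_one, integral_Ioc_eq_integral_Ioo,
    ← tendsto_nhds_unique hlim hpi]
  simp [logAbsOneSub, cexpTwoPiI, norm_sub_rev]
end
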